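/- arXiv:1102.0548 — 2 statements merged into one kernel-verified Lean document; each statement's English description precedes it below -/
import Mathlib

section
/- Let n be a positive integer, let f : ℝⁿ → ℝ be a smooth everywhere-positive function satisfying Δ_f f = n/2 − f, and let R : ℝⁿ → ℝ be a smooth function satisfying Δ_f R ≤ R pointwise, where Δ_f φ := Δφ − ⟪∇f, ∇φ⟫. Let c > 0 and define φ := R − c f⁻¹ − c n f⁻². Then at every point, Δ_f φ ≤ φ − c n f⁻³·(f/2 − n) − c f⁻⁴·(2f + 6n)·|∇f|². -/
open scoped RealInnerProductSpace

/-- The Euclidean Laplacian: the trace of the second derivative, computed in the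
standard orthonormal basis of `EuclideanSpace ℝ (Fin n)`. -/
noncomputable def laplacian {n : ℕ} (u : EuclideanSpace ℝ (Fin n) → ℝ)
    (x : EuclideanSpace ℝ (Fin n)) : ℝ :=
  ∑ i : Fin n,
    iteratedFDeriv ℝ 2 u x ![EuclideanSpace.single i 1, EuclideanSpace.single i 1]

/-- The drift-Laplacian (f-Laplacian): `Δ_f φ = Δ φ - ⟪∇ f, ∇ φ⟫`. -/
noncomputable def driftLaplacian {n : ℕ} (f φ : EuclideanSpace ℝ (Fin n) → ℝ)
    (x : EuclideanSpace ℝ (Fin n)) : ℝ :=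
  laplacian φ x - ⟪gradient f x, gradient φ x⟫

section Aux

variable {n : ℕ}
local notation "E" => EuclideanSpace ℝ (Fin n)

lemma aux_inner_gradient_eq (u : E → ℝ) (x v : E) :
    ⟪gradient u x, v⟫ = fderiv ℝ u x v := by
  rw [gradient]; exact InnerProductSpace.toDual_symm_apply

lemma aux_driftLaplacian_eq (f u : E → ℝ) (x : E) :
    driftLaplacian f u x = laplacian u x - fderiv ℝ u x (gradient f x) := by
  rw [driftLaplacian, real_inner_comm, aux_inner_gradient_eq]

lemma aux_norm_gradient_sq (u : E → ℝ) (x : E) :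
    ‖gradient u x‖ ^ 2 = ∑ i : Fin n, (fderiv ℝ u x (EuclideanSpace.single i 1)) ^ 2 := by
  rw [← real_inner_self_eq_norm_sq, PiLp.inner_apply]
  refine Finset.sum_congr rfl fun i _ => ?_
  rw [← aux_inner_gradient_eq, EuclideanSpace.inner_single_right]
  simp [RCLike.inner_apply, sq]

lemma aux_comp_fderiv (f : E → ℝ) (hf : ContDiff ℝ (⊤ : ℕ∞) f) (g g' : ℝ → ℝ)
    (hg1 : ∀ y : E, HasDerivAt g (g' (f y)) (f y)) (x : E) :
    fderiv ℝ (fun z => g (f z)) x = g' (f x) • fderiv ℝ f x := by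
  have h := ((hg1 x).comp_hasFDerivAt x (hf.differentiable (by simp) x).hasFDerivAt).fderiv
  rw [Function.comp_def] at h
  exact h

lemma aux_comp_second (f : E → ℝ) (hf : ContDiff ℝ (⊤ : ℕ∞) f) (g g' g'' : ℝ → ℝ)
    (hg1 : ∀ y : E, HasDerivAt g (g' (f y)) (f y))
    (hg2 : ∀ y : E, HasDerivAt g' (g'' (f y)) (f y)) (x : E) (v w : E) :
    fderiv ℝ (fderiv ℝ (fun z => g (f z))) x v w
      = g'' (f x) * (fderiv ℝ f x v) * (fderiv ℝ f x w)
        + g' (f x) * (fderiv ℝ (fderiv ℝ f) x v w) := by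
  have hfd : (fun y => fderiv ℝ (fun z => g (f z)) y) = fun y => g' (f y) • fderiv ℝ f y :=
    funext fun y => aux_comp_fderiv f hf g g' hg1 y
  have hc : HasFDerivAt (fun y => g' (f y)) ((g'' (f x)) • fderiv ℝ f x) x := by
    have h := (hg2 x).comp_hasFDerivAt x (hf.differentiable (by simp) x).hasFDerivAt
    exact h
  have hL : HasFDerivAt (fderiv ℝ f) (fderiv ℝ (fderiv ℝ f) x) x :=
    (((hf.fderiv_right (m := 1) (WithTop.coe_le_coe.mpr (le_top : (1 + 1 : ℕ∞) ≤ ⊤))).differentiable one_ne_zero) x).hasFDerivAt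
  have hF1 := hc.smul hL
  have heq : fderiv ℝ (fderiv ℝ (fun z => g (f z))) x
      = (g' (f x)) • (fderiv ℝ (fderiv ℝ f) x)
        + ((g'' (f x)) • fderiv ℝ f x).smulRight (fderiv ℝ f x) := by
    rw [show fderiv ℝ (fun z => g (f z)) = fun y => g' (f y) • fderiv ℝ f y from hfd]
    exact hF1.fderiv
  rw [heq]
  simp [ContinuousLinearMap.add_apply, ContinuousLinearMap.smul_apply,
    ContinuousLinearMap.smulRight_apply, smul_eq_mul]
  ring

lemma aux_driftLaplacian_comp (f : E → ℝ) (hf : ContDiff ℝ (⊤ : ℕ∞) f) (g g' g'' : ℝ → ℝ)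
    (hg1 : ∀ y : E, HasDerivAt g (g' (f y)) (f y))
    (hg2 : ∀ y : E, HasDerivAt g' (g'' (f y)) (f y)) (x : E) :
    driftLaplacian f (fun z => g (f z)) x
      = g'' (f x) * ‖gradient f x‖ ^ 2 + g' (f x) * driftLaplacian f f x := by
  have hlap : laplacian (fun z => g (f z)) x
      = g'' (f x) * ‖gradient f x‖ ^ 2 + g' (f x) * laplacian f x := by
    unfold laplacian
    have h1 : ∀ i : Fin n,
        iteratedFDeriv ℝ 2 (fun z => g (f z)) x
          ![EuclideanSpace.single i 1, EuclideanSpace.single i 1]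
        = g'' (f x) * (fderiv ℝ f x (EuclideanSpace.single i 1)) ^ 2
          + g' (f x) * iteratedFDeriv ℝ 2 f x
              ![EuclideanSpace.single i 1, EuclideanSpace.single i 1] := by
      intro i
      rw [iteratedFDeriv_two_apply, iteratedFDeriv_two_apply]
      simp only [Matrix.cons_val_zero, Matrix.cons_val_one, Matrix.head_cons]
      rw [aux_comp_second f hf g g' g'' hg1 hg2]
      ring
    rw [Finset.sum_congr rfl fun i _ => h1 i, Finset.sum_add_distrib,
      ← Finset.mul_sum, ← Finset.mul_sum, aux_norm_gradient_sq]
  have hinner : fderiv ℝ (fun z => g (f z)) x (gradient f x)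
      = g' (f x) * fderiv ℝ f x (gradient f x) := by
    rw [aux_comp_fderiv f hf g g' hg1]; simp
  rw [aux_driftLaplacian_eq, aux_driftLaplacian_eq, hlap, hinner]
  ring

lemma aux_laplacian_add (u v : E → ℝ) (hu : ContDiff ℝ 2 u) (hv : ContDiff ℝ 2 v) (x : E) :
    laplacian (fun y => u y + v y) x = laplacian u x + laplacian v x := by
  unfold laplacian
  rw [← Finset.sum_add_distrib]
  refine Finset.sum_congr rfl fun i _ => ?_
  rw [iteratedFDeriv_add_apply' hu.contDiffAt hv.contDiffAt]
  rfl

lemma aux_laplacian_neg (u : E → ℝ) (x : E) :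
    laplacian (fun y => -u y) x = -laplacian u x := by
  unfold laplacian
  rw [← Finset.sum_neg_distrib]
  refine Finset.sum_congr rfl fun i _ => ?_
  rw [show (fun y => -u y) = -u from rfl, iteratedFDeriv_neg_apply]
  rfl

lemma aux_laplacian_const_mul (a : ℝ) (u : E → ℝ) (hu : ContDiff ℝ 2 u) (x : E) :
    laplacian (fun y => a * u y) x = a * laplacian u x := by
  unfold laplacian
  rw [Finset.mul_sum]
  refine Finset.sum_congr rfl fun i _ => ?_
  rw [show (fun y => a * u y) = fun y => a • u y from rfl,
    iteratedFDeriv_const_smul_apply' hu.contDiffAt]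
  rfl

lemma aux_laplacian_sub_sub (R u v : E → ℝ) (hR : ContDiff ℝ 2 R) (hu : ContDiff ℝ 2 u)
    (hv : ContDiff ℝ 2 v) (a b : ℝ) (x : E) :
    laplacian (fun y => R y - a * u y - b * v y) x
      = laplacian R x - a * laplacian u x - b * laplacian v x := by
  have hau : ContDiff ℝ 2 (fun y => a * u y) := by exact hu.const_smul a
  have hbv : ContDiff ℝ 2 (fun y => b * v y) := by exact hv.const_smul b
  have h1 : (fun y => R y - a * u y - b * v y)
      = fun y => R y + ((-(a * u y)) + (-(b * v y))) := by funext y; ring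
  rw [h1, aux_laplacian_add R _ hR (hau.neg.add hbv.neg),
    aux_laplacian_add _ _ hau.neg hbv.neg,
    aux_laplacian_neg, aux_laplacian_neg, aux_laplacian_const_mul a u hu,
    aux_laplacian_const_mul b v hv]
  ring

lemma aux_driftLaplacian_sub_sub (f R u v : E → ℝ) (hR : ContDiff ℝ 2 R)
    (hu : ContDiff ℝ 2 u) (hv : ContDiff ℝ 2 v) (a b : ℝ) (x : E) :
    driftLaplacian f (fun y => R y - a * u y - b * v y) x
      = driftLaplacian f R x - a * driftLaplacian f u x - b * driftLaplacian f v x := by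
  have h12 : (1 : WithTop ℕ∞) ≤ 2 := by norm_num
  have dR : DifferentiableAt ℝ R x := (hR.differentiable (by norm_num)).differentiableAt
  have du : DifferentiableAt ℝ u x := (hu.differentiable (by norm_num)).differentiableAt
  have dv : DifferentiableAt ℝ v x := (hv.differentiable (by norm_num)).differentiableAt
  have hfd : fderiv ℝ (fun y => R y - a * u y - b * v y) x (gradient f x)
      = fderiv ℝ R x (gradient f x) - a * fderiv ℝ u x (gradient f x)
        - b * fderiv ℝ v x (gradient f x) := by
    rw [fderiv_fun_sub (f := fun y => R y - a * u y) ((dR.sub (du.const_mul a)) : _) (dv.const_mul b),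
      fderiv_fun_sub dR (du.const_mul a), fderiv_const_mul du a, fderiv_const_mul dv b]
    simp
  rw [aux_driftLaplacian_eq, aux_driftLaplacian_eq, aux_driftLaplacian_eq,
    aux_driftLaplacian_eq, aux_laplacian_sub_sub R u v hR hu hv a b x, hfd]
  ring

end Aux

theorem stmt4 {n : ℕ} (hn : 0 < n)
    (f R : EuclideanSpace ℝ (Fin n) → ℝ)
    (hf : ContDiff ℝ (⊤ : ℕ∞) f) (hfpos : ∀ x, 0 < f x)
    (hsol : ∀ x, driftLaplacian f f x = n / 2 - f x)
    (hR : ContDiff ℝ (⊤ : ℕ∞) R)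
    (hRineq : ∀ x, driftLaplacian f R x ≤ R x)
    (c : ℝ) (hc : 0 < c)
    (φ : EuclideanSpace ℝ (Fin n) → ℝ)
    (hφ : φ = fun y => R y - c * (f y)⁻¹ - c * n * ((f y) ^ 2)⁻¹) :
    ∀ x, driftLaplacian f φ x ≤
      φ x - c * n * ((f x) ^ 3)⁻¹ * (f x / 2 - n)
        - c * ((f x) ^ 4)⁻¹ * (2 * f x + 6 * n) * ‖gradient f x‖ ^ 2 := by
  intro x
  have hne : ∀ y, f y ≠ 0 := fun y => (hfpos y).ne'
  -- derivative facts for g₁ = (·)⁻¹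
  have hg1 : ∀ y : EuclideanSpace ℝ (Fin n),
      HasDerivAt (fun s : ℝ => s⁻¹) ((fun s : ℝ => -((s ^ 2)⁻¹)) (f y)) (f y) :=
    fun y => hasDerivAt_inv (hne y)
  have hg2 : ∀ y : EuclideanSpace ℝ (Fin n),
      HasDerivAt (fun s : ℝ => -((s ^ 2)⁻¹)) ((fun s : ℝ => 2 * (s ^ 3)⁻¹) (f y)) (f y) := by
    intro y
    have h := ((hasDerivAt_pow 2 (f y)).inv (pow_ne_zero 2 (hne y))).neg
    convert h using 1
    · rfl
    · rfl
    · rfl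
    have := hne y
    field_simp
    ring
  -- derivative facts for g₂ = ((·)^2)⁻¹
  have hh1 : ∀ y : EuclideanSpace ℝ (Fin n),
      HasDerivAt (fun s : ℝ => (s ^ 2)⁻¹) ((fun s : ℝ => -(2 * (s ^ 3)⁻¹)) (f y)) (f y) := by
    intro y
    have h := (hasDerivAt_pow 2 (f y)).inv (pow_ne_zero 2 (hne y))
    convert h using 1
    · rfl
    · rfl
    · rfl
    have := hne y
    field_simp
    ring
  have hh2 : ∀ y : EuclideanSpace ℝ (Fin n),
      HasDerivAt (fun s : ℝ => -(2 * (s ^ 3)⁻¹)) ((fun s : ℝ => 6 * (s ^ 4)⁻¹) (f y)) (f y) := by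
    intro y
    have h := (((hasDerivAt_pow 3 (f y)).inv (pow_ne_zero 3 (hne y))).const_mul (2 : ℝ)).neg
    convert h using 1
    · rfl
    · rfl
    · rfl
    have := hne y
    field_simp
    ring
  set t := f x with ht
  set G := ‖gradient f x‖ ^ 2 with hG
  have htne : t ≠ 0 := hne x
  have d1 : driftLaplacian f (fun y => (f y)⁻¹) x
      = 2 * (t ^ 3)⁻¹ * G + (-((t ^ 2)⁻¹)) * (n / 2 - t) := by
    have h := aux_driftLaplacian_comp f hf (fun s : ℝ => s⁻¹) (fun s : ℝ => -((s ^ 2)⁻¹))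
      (fun s : ℝ => 2 * (s ^ 3)⁻¹) hg1 hg2 x
    rw [hsol x] at h
    exact h
  have d2 : driftLaplacian f (fun y => ((f y) ^ 2)⁻¹) x
      = 6 * (t ^ 4)⁻¹ * G + (-(2 * (t ^ 3)⁻¹)) * (n / 2 - t) := by
    have h := aux_driftLaplacian_comp f hf (fun s : ℝ => (s ^ 2)⁻¹) (fun s : ℝ => -(2 * (s ^ 3)⁻¹))
      (fun s : ℝ => 6 * (s ^ 4)⁻¹) hh1 hh2 x
    rw [hsol x] at h
    exact h
  have hu1 : ContDiff ℝ 2 (fun y => (f y)⁻¹) := (hf.inv hne).of_le (WithTop.coe_le_coe.mpr (le_top : (2 : ℕ∞) ≤ ⊤))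
  have hu2 : ContDiff ℝ 2 (fun y => ((f y) ^ 2)⁻¹) :=
    ((hf.pow 2).inv (fun y => pow_ne_zero 2 (hne y))).of_le (WithTop.coe_le_coe.mpr (le_top : (2 : ℕ∞) ≤ ⊤))
  have dφ : driftLaplacian f φ x
      = driftLaplacian f R x - c * driftLaplacian f (fun y => (f y)⁻¹) x
        - (c * n) * driftLaplacian f (fun y => ((f y) ^ 2)⁻¹) x := by
    rw [hφ]
    exact aux_driftLaplacian_sub_sub f R _ _ (hR.of_le (WithTop.coe_le_coe.mpr (le_top : (2 : ℕ∞) ≤ ⊤))) hu1 hu2 c (c * n) x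
  have hφx : φ x = R x - c * t⁻¹ - c * n * (t ^ 2)⁻¹ := by rw [hφ]
  have key : - c * (2 * (t ^ 3)⁻¹ * G + (-((t ^ 2)⁻¹)) * (n / 2 - t))
      - (c * n) * (6 * (t ^ 4)⁻¹ * G + (-(2 * (t ^ 3)⁻¹)) * (n / 2 - t))
      = - (c * t⁻¹) - c * n * (t ^ 2)⁻¹ - c * n * (t ^ 3)⁻¹ * (t / 2 - n)
        - c * (t ^ 4)⁻¹ * (2 * t + 6 * n) * G := by
    field_simp
    ring
  rw [dφ, d1, d2, hφx]
  have hR' := hRineq x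
  linarith [key]
end

section
/- Let n be a positive integer. Let f : ℝⁿ → ℝ be smooth, everywhere positive, satisfying Δ_f f = n/2 − f (where Δ_f φ := Δφ − ⟪∇f, ∇φ⟫), and suppose there is a constant C₁ > 0 such that (1/4)·((|x| − C₁)₊)² ≤ f(x) ≤ (1/4)·(|x| + C₁)² for all x ∈ ℝⁿ. Let R : ℝⁿ → ℝ be smooth with R > 0 everywhere and Δ_f R ≤ R pointwise. Then for every sufficiently small c > 0 one has R(x) ≥ c·f(x)⁻¹ + c·n·f(x)⁻² for all x ∈ ℝⁿ. More precisely, if c > 0 is chosen so that R − c f⁻¹ − c n f⁻² > 0 on the closed ball B̄(0, C₁ + 3n), then R ≥ c f⁻¹ + c n f⁻² everywhere. -/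
open scoped RealInnerProductSpace

section Aux

lemma deriv_contDiff_aux {g : ℝ → ℝ} {m : ℕ} (hg : ContDiff ℝ (⊤ : ℕ∞) g) :
    ContDiff ℝ m (deriv g) := by
  have : ContDiff ℝ ((m : WithTop ℕ∞) + 1) g := hg.of_le (by exact_mod_cast le_top)
  exact (contDiff_succ_iff_deriv.mp this).2.2

/-- 1D second derivative test at a local minimum. -/
lemma oneD_second_deriv_nonneg {g : ℝ → ℝ} (hg : ContDiff ℝ (⊤ : ℕ∞) g)
    (hmin : IsLocalMin g 0) : 0 ≤ deriv (deriv g) 0 := by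
  by_contra h
  push_neg at h
  have hg1 : ContDiff ℝ 1 (deriv g) := deriv_contDiff_aux hg
  have hcont : Continuous (deriv (deriv g)) := (contDiff_one_iff_deriv.mp hg1).2
  have h0 : deriv g 0 = 0 := hmin.deriv_eq_zero
  obtain ⟨δ, hδ, hball⟩ := Metric.eventually_nhds_iff.mp
    (hcont.continuousAt.eventually_lt continuous_const.continuousAt h)
  have hanti : StrictAntiOn (deriv g) (Set.Icc 0 (δ/2)) := by
    apply strictAntiOn_of_deriv_neg (convex_Icc _ _) (hg1.continuous.continuousOn)
    intro x hx
    rw [interior_Icc] at hx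
    apply hball
    rw [Real.dist_eq, sub_zero, abs_of_nonneg hx.1.le]
    linarith [hx.2]
  have hderivneg : ∀ x ∈ Set.Ioo (0:ℝ) (δ/2), deriv g x < 0 := by
    intro x hx
    have := hanti (Set.mem_Icc.mpr ⟨le_refl 0, by linarith [hx.2]⟩)
      (Set.mem_Icc.mpr ⟨hx.1.le, hx.2.le⟩) hx.1
    linarith
  have hganti : StrictAntiOn g (Set.Icc 0 (δ/2)) := by
    apply strictAntiOn_of_deriv_neg (convex_Icc _ _) (hg.continuous.continuousOn)
    intro x hx
    rw [interior_Icc] at hx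
    exact hderivneg x hx
  obtain ⟨ε, hε, hballmin⟩ := Metric.eventually_nhds_iff.mp hmin
  set t := min (δ/4) (ε/2) with ht
  have ht0 : 0 < t := lt_min (by linarith) (by linarith)
  have htδ : t ≤ δ/4 := min_le_left _ _
  have htε : t ≤ ε/2 := min_le_right _ _
  have h1 : g t < g 0 := hganti (Set.mem_Icc.mpr ⟨le_refl 0, by linarith⟩)
    (Set.mem_Icc.mpr ⟨ht0.le, by linarith⟩) ht0
  have h2 : g 0 ≤ g t := hballmin (by rw [Real.dist_eq, sub_zero, abs_of_pos ht0]; linarith)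
  linarith

variable {n : ℕ}
local notation "E" => EuclideanSpace ℝ (Fin n)

lemma line_hasDerivAt (x₀ e : E) (t : ℝ) :
    HasDerivAt (fun s : ℝ => x₀ + s • e) e t := by
  simpa using ((hasDerivAt_id t).smul_const e).const_add x₀

lemma second_directional_nonneg {u : E → ℝ} (hu : ContDiff ℝ (⊤ : ℕ∞) u) {x₀ : E}
    (hmin : IsLocalMin u x₀) (e : E) : 0 ≤ fderiv ℝ (fderiv ℝ u) x₀ e e := by
  set L : ℝ → E := fun s => x₀ + s • e with hL
  have hL0 : L 0 = x₀ := by simp [hL]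
  have hLc : ContDiff ℝ (⊤ : ℕ∞) L := contDiff_const.add (contDiff_id.smul contDiff_const)
  set g : ℝ → ℝ := fun t => u (L t) with hgdef
  have hgC : ContDiff ℝ (⊤ : ℕ∞) g := hu.comp hLc
  have hgmin : IsLocalMin g 0 := by
    have htd : Filter.Tendsto L (nhds 0) (nhds x₀) := by
      rw [← hL0]; exact hLc.continuous.continuousAt
    have h := htd.eventually hmin
    unfold IsLocalMin IsMinFilter
    simpa [hgdef, hL0] using h
  have hud : Differentiable ℝ u := hu.differentiable (by simp)
  have hderiv : deriv g = fun t => fderiv ℝ u (L t) e := by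
    funext t
    exact (((hud (L t)).hasFDerivAt).comp_hasDerivAt t (line_hasDerivAt x₀ e t)).deriv
  have hD2 : HasFDerivAt (fderiv ℝ u) (fderiv ℝ (fderiv ℝ u) x₀) (L 0) := by
    rw [hL0]
    exact ((hu.fderiv_right (m := 1) (WithTop.coe_le_coe.mpr le_top)).differentiable (by simp) x₀).hasFDerivAt
  have h2 : HasDerivAt (fun t => fderiv ℝ u (L t) e) (fderiv ℝ (fderiv ℝ u) x₀ e e) 0 := by
    have hc : HasDerivAt (fun t => fderiv ℝ u (L t)) (fderiv ℝ (fderiv ℝ u) x₀ e) 0 :=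
      hD2.comp_hasDerivAt 0 (line_hasDerivAt x₀ e 0)
    simpa using hc.clm_apply (hasDerivAt_const 0 e)
  have := oneD_second_deriv_nonneg hgC hgmin
  rwa [hderiv, h2.deriv] at this

lemma lap_eq (u : E → ℝ) (x : E) :
    laplacian u x = ∑ i : Fin n, fderiv ℝ (fderiv ℝ u) x (EuclideanSpace.single i 1)
      (EuclideanSpace.single i 1) := by
  unfold laplacian
  congr 1; funext i
  rw [iteratedFDeriv_two_apply]
  simp

lemma inner_gradient (f : E → ℝ) (x v : E) : ⟪gradient f x, v⟫ = fderiv ℝ f x v :=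
  InnerProductSpace.toDual_symm_apply

lemma sum_sq_gradient (f : E → ℝ) (x : E) :
    ∑ i : Fin n, (fderiv ℝ f x (EuclideanSpace.single i 1))^2 = ‖gradient f x‖ ^ 2 := by
  rw [← real_inner_self_eq_norm_sq]
  rw [PiLp.inner_apply]
  congr 1; funext i
  rw [← inner_gradient]
  have : ⟪gradient f x, EuclideanSpace.single i (1:ℝ)⟫ = gradient f x i := by
    rw [EuclideanSpace.inner_single_right]; simp
  rw [this]
  simp [RCLike.inner_apply]

lemma driftLaplacian_comp (f : E → ℝ) (hf : ContDiff ℝ (⊤ : ℕ∞) f) (hfpos : ∀ x, 0 < f x)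
    (φ φ' φ'' : ℝ → ℝ)
    (h1 : ∀ t : ℝ, 0 < t → HasDerivAt φ (φ' t) t)
    (h2 : ∀ t : ℝ, 0 < t → HasDerivAt φ' (φ'' t) t) (x : E) :
    driftLaplacian f (fun y => φ (f y)) x
      = φ' (f x) * driftLaplacian f f x + φ'' (f x) * ‖gradient f x‖ ^ 2 := by
  have hfd : Differentiable ℝ f := hf.differentiable (by simp)
  have hD1 : ∀ y : E, HasFDerivAt (fun z => φ (f z)) (φ' (f y) • fderiv ℝ f y) y := fun y =>
    (h1 (f y) (hfpos y)).comp_hasFDerivAt y (hfd y).hasFDerivAt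
  have hfd1 : fderiv ℝ (fun z => φ (f z)) = fun y => φ' (f y) • fderiv ℝ f y :=
    funext fun y => (hD1 y).fderiv
  have hD2' : HasFDerivAt (fun y => φ' (f y)) (φ'' (f x) • fderiv ℝ f x) x :=
    (h2 (f x) (hfpos x)).comp_hasFDerivAt x (hfd x).hasFDerivAt
  have hDf2 : HasFDerivAt (fderiv ℝ f) (fderiv ℝ (fderiv ℝ f) x) x :=
    ((hf.fderiv_right (m := 1) (WithTop.coe_le_coe.mpr le_top)).differentiable (by simp) x).hasFDerivAt
  have hsmul : HasFDerivAt (fun y => φ' (f y) • fderiv ℝ f y)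
      (φ' (f x) • fderiv ℝ (fderiv ℝ f) x
        + (φ'' (f x) • fderiv ℝ f x).smulRight (fderiv ℝ f x)) x := hD2'.smul hDf2
  have hsecond : fderiv ℝ (fderiv ℝ (fun z => φ (f z))) x
      = φ' (f x) • fderiv ℝ (fderiv ℝ f) x
        + (φ'' (f x) • fderiv ℝ f x).smulRight (fderiv ℝ f x) := by
    rw [hfd1]; exact hsmul.fderiv
  have hlap : laplacian (fun y => φ (f y)) x
      = φ' (f x) * laplacian f x + φ'' (f x) * ‖gradient f x‖ ^ 2 := by
    rw [lap_eq, lap_eq, ← sum_sq_gradient f x, Finset.mul_sum, Finset.mul_sum,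
      ← Finset.sum_add_distrib]
    congr 1; funext i
    rw [hsecond]
    simp only [ContinuousLinearMap.add_apply, ContinuousLinearMap.coe_smul',
      Pi.smul_apply, ContinuousLinearMap.smulRight_apply, ContinuousLinearMap.smul_apply,
      smul_eq_mul]
    ring
  have hgrad : gradient (fun y => φ (f y)) x = φ' (f x) • gradient f x := by
    unfold gradient
    rw [hfd1]
    exact map_smul _ _ _
  unfold driftLaplacian
  rw [hlap, hgrad, real_inner_smul_right, real_inner_self_eq_norm_sq]
  ring

lemma driftLaplacian_sub (f u w : E → ℝ) (hu : ContDiff ℝ (⊤ : ℕ∞) u) (hw : ContDiff ℝ (⊤ : ℕ∞) w) (x : E) :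
    driftLaplacian f (fun y => u y - w y) x = driftLaplacian f u x - driftLaplacian f w x := by
  have h2u : ContDiff ℝ 2 u := hu.of_le (WithTop.coe_le_coe.mpr le_top)
  have h2w : ContDiff ℝ 2 w := hw.of_le (WithTop.coe_le_coe.mpr le_top)
  have h2wn : ContDiff ℝ 2 (-w) := h2w.neg
  have hlap : laplacian (fun y => u y - w y) x = laplacian u x - laplacian w x := by
    unfold laplacian
    rw [← Finset.sum_sub_distrib]
    congr 1; funext i
    have heq : (fun y => u y - w y) = u + (-w) := by
      funext y; simp [sub_eq_add_neg]
    rw [heq, iteratedFDeriv_add_apply h2u.contDiffAt h2wn.contDiffAt]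
    rw [ContinuousMultilinearMap.add_apply, iteratedFDeriv_neg_apply]
    simp [sub_eq_add_neg]
  have hgrad : gradient (fun y => u y - w y) x = gradient u x - gradient w x := by
    unfold gradient
    rw [fderiv_fun_sub (hu.differentiable (by simp) x) (hw.differentiable (by simp) x), map_sub]
  unfold driftLaplacian
  rw [hlap, hgrad, inner_sub_right]
  ring

lemma hasDerivAt_inv_pow_aux (k : ℕ) {t : ℝ} (ht : 0 < t) :
    HasDerivAt (fun s : ℝ => (s^k)⁻¹) (-(k * t^(k-1)) / (t^k)^2) t :=
  (hasDerivAt_pow k t).inv (pow_ne_zero k ht.ne')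

end Aux

set_option maxHeartbeats 2000000 in
theorem stmt7 {n : ℕ} (hn : 0 < n)
    (f R : EuclideanSpace ℝ (Fin n) → ℝ)
    (hf : ContDiff ℝ (⊤ : ℕ∞) f) (hfpos : ∀ x, 0 < f x)
    (hsol : ∀ x, driftLaplacian f f x = n / 2 - f x)
    (C₁ : ℝ) (hC₁ : 0 < C₁)
    (hflow : ∀ x, (1 / 4) * (max (‖x‖ - C₁) 0) ^ 2 ≤ f x)
    (hfup : ∀ x, f x ≤ (1 / 4) * (‖x‖ + C₁) ^ 2)
    (hR : ContDiff ℝ (⊤ : ℕ∞) R) (hRpos : ∀ x, 0 < R x)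
    (hRineq : ∀ x, driftLaplacian f R x ≤ R x) :
    (∃ c₀ > (0 : ℝ), ∀ c : ℝ, 0 < c → c ≤ c₀ →
        ∀ x, c * (f x)⁻¹ + c * n * ((f x) ^ 2)⁻¹ ≤ R x) ∧
    (∀ c : ℝ, 0 < c →
      (∀ x ∈ Metric.closedBall (0 : EuclideanSpace ℝ (Fin n)) (C₁ + 3 * n),
          0 < R x - c * (f x)⁻¹ - c * n * ((f x) ^ 2)⁻¹) →
      ∀ x, c * (f x)⁻¹ + c * n * ((f x) ^ 2)⁻¹ ≤ R x) := by
  have hn1 : (1 : ℝ) ≤ (n : ℝ) := by exact_mod_cast hn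
  -- ========== the key maximum-principle statement (second bullet) ==========
  have key : ∀ c : ℝ, 0 < c →
      (∀ x ∈ Metric.closedBall (0 : EuclideanSpace ℝ (Fin n)) (C₁ + 3 * n),
          0 < R x - c * (f x)⁻¹ - c * n * ((f x) ^ 2)⁻¹) →
      ∀ x, c * (f x)⁻¹ + c * n * ((f x) ^ 2)⁻¹ ≤ R x := by
    intro c hc hball
    by_contra hcon
    push_neg at hcon
    obtain ⟨x₁, hx₁⟩ := hcon
    -- the barrier function
    set φ : ℝ → ℝ := fun t => c * t⁻¹ + c * n * (t^2)⁻¹ with hφdef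
    set φ' : ℝ → ℝ := fun t => -(c * (t^2)⁻¹) - 2*c*n*(t^3)⁻¹ with hφ'def
    set φ'' : ℝ → ℝ := fun t => 2*c*(t^3)⁻¹ + 6*c*n*(t^4)⁻¹ with hφ''def
    have hder1 : ∀ t : ℝ, 0 < t → HasDerivAt φ (φ' t) t := by
      intro t ht
      have ha := (hasDerivAt_inv ht.ne').const_mul c
      have hb := (hasDerivAt_inv_pow_aux 2 ht).const_mul (c * (n:ℝ))
      have hab := ha.add hb
      refine hab.congr_deriv ?_
      simp only [hφ'def]
      field_simp
      ring
    have hder2 : ∀ t : ℝ, 0 < t → HasDerivAt φ' (φ'' t) t := by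
      intro t ht
      have ha := ((hasDerivAt_inv_pow_aux 2 ht).const_mul c).neg
      have hb := (hasDerivAt_inv_pow_aux 3 ht).const_mul (2*c*(n:ℝ))
      have hab := ha.sub hb
      refine hab.congr_deriv ?_
      simp only [hφ''def]
      field_simp
      ring
    set v : EuclideanSpace ℝ (Fin n) → ℝ := fun y => φ (f y) with hvdef
    have hvx : ∀ x, v x = c * (f x)⁻¹ + c * n * ((f x) ^ 2)⁻¹ := fun _ => rfl
    have hfne : ∀ x, f x ≠ 0 := fun x => (hfpos x).ne'
    have hvC : ContDiff ℝ (⊤ : ℕ∞) v := by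
      apply ContDiff.add
      · exact contDiff_const.mul (hf.inv hfne)
      · exact contDiff_const.mul ((hf.pow 2).inv (fun x => pow_ne_zero 2 (hfne x)))
    set u : EuclideanSpace ℝ (Fin n) → ℝ := fun y => R y - v y with hudef
    have huC : ContDiff ℝ (⊤ : ℕ∞) u := hR.sub hvC
    have hm : u x₁ < 0 := by
      have := hvx x₁
      simp only [hudef]
      rw [this]
      linarith
    set m := u x₁ with hmdef
    have hm' : 0 < -m := by linarith
    clear_value φ φ' φ'' v u m
    -- choose a big compact ball
    set M : ℝ := max 1 (2*(c + c*n)/(-m)) with hMdef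
    have hM1 : (1:ℝ) ≤ M := le_max_left _ _
    have hM0 : (0:ℝ) ≤ M := by linarith
    have hM2 : 2*(c + c*n)/(-m) ≤ M := le_max_right _ _
    set ρ : ℝ := max (C₁ + 2*Real.sqrt M + 1) (max ‖x₁‖ (C₁ + 3*n)) with hρdef
    set K := Metric.closedBall (0 : EuclideanSpace ℝ (Fin n)) ρ with hKdef
    have hx₁K : x₁ ∈ K := by
      simp only [hKdef, Metric.mem_closedBall, dist_zero_right]
      exact le_trans (le_max_left _ _) (le_max_right _ _)
    have hcomp : IsCompact K := isCompact_closedBall _ _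
    have hcontu : Continuous u := huC.continuous
    obtain ⟨x₀, hx₀K, hx₀min⟩ := hcomp.exists_isMinOn ⟨x₁, hx₁K⟩ hcontu.continuousOn
    have hux₀ : u x₀ ≤ m := by rw [hmdef]; exact isMinOn_iff.mp hx₀min x₁ hx₁K
    -- outside the ball, u is bigger than the minimum
    have houtside : ∀ y, y ∉ K → u x₀ ≤ u y := by
      intro y hy
      have hynorm : ρ < ‖y‖ := by
        by_contra hcon2
        push_neg at hcon2
        exact hy (by simp only [hKdef, Metric.mem_closedBall, dist_zero_right]; exact hcon2)
      have hsqrtnn : 0 ≤ Real.sqrt M := Real.sqrt_nonneg M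
      have hge : C₁ + 2*Real.sqrt M + 1 ≤ ρ := le_max_left _ _
      have hyC : 2*Real.sqrt M ≤ ‖y‖ - C₁ := by linarith
      have hyCnn : 0 ≤ ‖y‖ - C₁ := by linarith
      have hfy : M ≤ f y := by
        have h1 := hflow y
        rw [max_eq_left hyCnn] at h1
        have hsq : (2*Real.sqrt M)^2 ≤ (‖y‖ - C₁)^2 := by nlinarith
        have : (2*Real.sqrt M)^2 = 4 * M := by
          rw [mul_pow]; rw [Real.sq_sqrt hM0]; norm_num
        nlinarith
      have hfy1 : (1:ℝ) ≤ f y := le_trans hM1 hfy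
      have hfypos : (0:ℝ) < f y := lt_of_lt_of_le one_pos hfy1
      have hfy2 : 2*(c + c*n) ≤ (-m) * f y := by
        have := (div_le_iff₀ hm').mp (le_trans hM2 hfy)
        linarith
      have hinv : f y * (f y)⁻¹ = 1 := mul_inv_cancel₀ hfypos.ne'
      have hinvpos : 0 < (f y)⁻¹ := inv_pos.mpr hfypos
      have hsq_le : ((f y)^2)⁻¹ ≤ (f y)⁻¹ := by
        apply inv_anti₀ hfypos
        nlinarith
      have hvy : v y ≤ -m/2 := by
        rw [hvx y]
        have h5 : c * (f y)⁻¹ + c * n * ((f y)^2)⁻¹ ≤ (c + c*n) * (f y)⁻¹ := by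
          have : c * n * ((f y)^2)⁻¹ ≤ c * n * (f y)⁻¹ := by
            apply mul_le_mul_of_nonneg_left hsq_le
            positivity
          linarith
        have h6 : (c + c*n) * (f y)⁻¹ ≤ -m/2 := by
          have h8 := mul_le_mul_of_nonneg_right hfy2 hinvpos.le
          rw [mul_assoc (-m) (f y) (f y)⁻¹, hinv, mul_one] at h8
          linarith
        linarith
      have : m/2 ≤ u y := by
        have := hRpos y
        simp only [hudef]
        linarith
      linarith
    have hglobal : IsMinOn u Set.univ x₀ := by
      rw [isMinOn_iff]
      intro y _
      by_cases hy : y ∈ K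
      · exact isMinOn_iff.mp hx₀min y hy
      · exact houtside y hy
    have hlocmin : IsLocalMin u x₀ := hglobal.isLocalMin Filter.univ_mem
    -- x₀ is outside the small ball
    have hx₀norm : C₁ + 3*(n:ℝ) < ‖x₀‖ := by
      by_contra hcon2
      push_neg at hcon2
      have hmem : x₀ ∈ Metric.closedBall (0 : EuclideanSpace ℝ (Fin n)) (C₁ + 3*n) := by
        simp only [Metric.mem_closedBall, dist_zero_right]; exact hcon2
      have := hball x₀ hmem
      have hux : u x₀ = R x₀ - c * (f x₀)⁻¹ - c * n * ((f x₀) ^ 2)⁻¹ := by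
        simp only [hudef]; rw [hvx x₀]; ring
      rw [hux] at hux₀
      linarith
    -- f x₀ ≥ 2n
    have hA2n : 2*(n:ℝ) ≤ f x₀ := by
      have h1 := hflow x₀
      have h3n : (0:ℝ) ≤ 3*(n:ℝ) := by positivity
      have hge3n : 3*(n:ℝ) ≤ ‖x₀‖ - C₁ := by linarith
      rw [max_eq_left (by linarith)] at h1
      nlinarith
    have hApos : 0 < f x₀ := hfpos x₀
    set A := f x₀ with hAdef
    -- drift laplacian computations at x₀
    have hdv : driftLaplacian f v x₀ = φ' A * ((n:ℝ)/2 - A) + φ'' A * ‖gradient f x₀‖^2 := by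
      rw [hvdef]
      rw [driftLaplacian_comp f hf hfpos φ φ' φ'' hder1 hder2 x₀, hsol x₀]
    have hdu : driftLaplacian f u x₀ = driftLaplacian f R x₀ - driftLaplacian f v x₀ := by
      rw [hudef]
      exact driftLaplacian_sub f R v hR hvC x₀
    have hgradu : gradient u x₀ = 0 := by
      unfold gradient
      rw [hlocmin.fderiv_eq_zero]
      simp
    have hdrift0 : driftLaplacian f u x₀ = laplacian u x₀ := by
      unfold driftLaplacian
      rw [hgradu, inner_zero_right]
      ring
    have hlapnn : 0 ≤ laplacian u x₀ := by
      rw [lap_eq]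
      exact Finset.sum_nonneg fun i _ => second_directional_nonneg huC hlocmin _
    -- arithmetic
    have hAinv : A * A⁻¹ = 1 := mul_inv_cancel₀ hApos.ne'
    have harith : c * A⁻¹ + c * n * (A^2)⁻¹ ≤ φ' A * ((n:ℝ)/2 - A) := by
      have hident : φ' A * ((n:ℝ)/2 - A) - (c * A⁻¹ + c * n * (A^2)⁻¹)
          = c * n * (A/2 - n) * (A^3)⁻¹ := by
        simp only [hφ'def]
        field_simp
        ring
      have hnn : 0 ≤ c * n * (A/2 - n) * (A^3)⁻¹ := by
        apply mul_nonneg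
        · apply mul_nonneg (by positivity)
          linarith
        · positivity
      linarith
    have hphi'' : 0 ≤ φ'' A := by
      simp only [hφ''def]
      positivity
    have hGnn : 0 ≤ ‖gradient f x₀‖^2 := sq_nonneg _
    have hvlb : v x₀ ≤ driftLaplacian f v x₀ := by
      rw [hdv, hvx x₀]
      have h9 : 0 ≤ φ'' A * ‖gradient f x₀‖^2 := mul_nonneg hphi'' hGnn
      linarith [harith, h9]
    have hfinal : (0:ℝ) < 0 := by
      have h1 : 0 ≤ driftLaplacian f u x₀ := by rw [hdrift0]; exact hlapnn
      have h2 := hRineq x₀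
      have h3 : u x₀ = R x₀ - v x₀ := by rw [hudef]
      have h4 : u x₀ < 0 := lt_of_le_of_lt hux₀ hm
      rw [hdu] at h1
      linarith
    exact absurd hfinal (lt_irrefl 0)
  refine ⟨?_, key⟩
  -- ========== first bullet from the second ==========
  set K₀ := Metric.closedBall (0 : EuclideanSpace ℝ (Fin n)) (C₁ + 3 * n) with hK₀def
  have h0K : (0 : EuclideanSpace ℝ (Fin n)) ∈ K₀ := by
    simp only [hK₀def, Metric.mem_closedBall, dist_self]
    positivity
  have hcomp : IsCompact K₀ := isCompact_closedBall _ _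
  set w : EuclideanSpace ℝ (Fin n) → ℝ := fun x => (f x)⁻¹ + n * ((f x)^2)⁻¹ with hwdef
  have hwcont : Continuous w := by
    apply Continuous.add
    · exact (hf.continuous).inv₀ (fun x => (hfpos x).ne')
    · exact continuous_const.mul (((hf.continuous).pow 2).inv₀
        (fun x => pow_ne_zero 2 (hfpos x).ne'))
  obtain ⟨a, haK, hamin⟩ := hcomp.exists_isMinOn ⟨0, h0K⟩ (hR.continuous.continuousOn)
  obtain ⟨b, hbK, hbmax⟩ := hcomp.exists_isMaxOn ⟨0, h0K⟩ hwcont.continuousOn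
  have hRa : 0 < R a := hRpos a
  have hwb : 0 ≤ w b := by
    simp only [hwdef]
    have := hfpos b
    positivity
  refine ⟨R a / (2 * (w b + 1)), by positivity, ?_⟩
  intro c hc hcle
  apply key c hc
  intro x hx
  have hwge : w x ≤ w b := isMaxOn_iff.mp hbmax x hx
  have hwxnn : 0 ≤ w x := by
    simp only [hwdef]
    have := hfpos x
    positivity
  have hcw : c * w x ≤ (R a / (2 * (w b + 1))) * w b := by
    calc c * w x ≤ c * w b := mul_le_mul_of_nonneg_left hwge hc.le
    _ ≤ (R a / (2 * (w b + 1))) * w b := mul_le_mul_of_nonneg_right hcle hwb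
  have hhalf : (R a / (2 * (w b + 1))) * w b < R a := by
    rw [div_mul_eq_mul_div, div_lt_iff₀ (by positivity)]
    nlinarith
  have hRx : R a ≤ R x := isMinOn_iff.mp hamin x hx
  have : c * (f x)⁻¹ + c * n * ((f x)^2)⁻¹ = c * w x := by
    simp only [hwdef]; ring
  linarith [this ▸ (lt_of_le_of_lt hcw hhalf).trans_le hRx]
end
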